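/- Let T > 0, c ∈ ℝ, and M ≥ 0. Then ∫₀^M [ √(2/(πT))·exp(−(m − cT)²/(2T)) − 2c·e^{2cm}·Φ(−(m + cT)/√T) ] dm = e^{2cM}·( Φ((M + cT)/√T) − 1 ) + Φ((M − cT)/√T), where Φ denotes the standard normal cumulative distribution function Φ(x) = ∫_{−∞}^{x} e^{−u²/2}/√(2π) du. -/

import Mathlib

open Real

/-- The standard normal cumulative distribution function. -/
noncomputable def stdNormalCdf (x : ℝ) : ℝ :=
  ∫ u in Set.Iio x, Real.exp (-u ^ 2 / 2) / Real.sqrt (2 * π)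

/-!
By the fundamental theorem of calculus it suffices that the closed form
`F m = e^{2cm} (Φ((m + cT)/√T) - 1) + Φ((m - cT)/√T)` vanishes at `0` and has the density as
derivative. Both follow from the symmetry `Φ(-x) = 1 - Φ(x)` together with the identity
`e^{2cm} φ((m + cT)/√T) = φ((m - cT)/√T)` for the standard normal density `φ`: the exponents differ
by `((m + cT)² - (m - cT)²) / (2T) = 2cm`, so the two Gaussian terms of `F'` coincide.
-/

open MeasureTheory

noncomputable def stdNormalPdf (u : ℝ) : ℝ := exp (-u ^ 2 / 2) / √(2 * π)

lemma continuous_stdNormalPdf : Continuous stdNormalPdf := by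
  unfold stdNormalPdf; fun_prop

lemma integrable_stdNormalPdf : Integrable stdNormalPdf := by
  convert (integrable_exp_neg_mul_sq (by norm_num : (0 : ℝ) < 1 / 2)).div_const √(2 * π)
    using 1
  ext u
  rw [stdNormalPdf]
  ring_nf

lemma stdNormalPdf_neg (x : ℝ) : stdNormalPdf (-x) = stdNormalPdf x := by
  simp [stdNormalPdf]

lemma integral_stdNormalPdf : ∫ u, stdNormalPdf u = 1 := by
  have h : ∀ u : ℝ, exp (-u ^ 2 / 2) = exp (-(1 / 2) * u ^ 2) := fun u => by ring_nf
  simp_rw [stdNormalPdf, integral_div, h, integral_gaussian]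
  rw [div_eq_one_iff_eq (by positivity), show π / (1 / 2) = 2 * π by ring]

lemma stdNormalCdf_eq_integral_Iic (x : ℝ) :
    stdNormalCdf x = ∫ u in Set.Iic x, stdNormalPdf u := by
  rw [integral_Iic_eq_integral_Iio]; rfl

lemma hasDerivAt_stdNormalCdf (x : ℝ) : HasDerivAt stdNormalCdf (stdNormalPdf x) x := by
  have hΦ : ∀ y, stdNormalCdf y = stdNormalCdf 0 + ∫ u in (0 : ℝ)..y, stdNormalPdf u := by
    intro y
    rw [stdNormalCdf_eq_integral_Iic, stdNormalCdf_eq_integral_Iic,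
      ← intervalIntegral.integral_Iic_sub_Iic integrable_stdNormalPdf.integrableOn
        integrable_stdNormalPdf.integrableOn]
    ring
  refine (HasDerivAt.const_add _ ?_).congr_of_eventuallyEq (.of_forall hΦ)
  exact intervalIntegral.integral_hasDerivAt_right integrable_stdNormalPdf.intervalIntegrable
    (continuous_stdNormalPdf.stronglyMeasurableAtFilter _ _) continuous_stdNormalPdf.continuousAt

@[fun_prop]
lemma continuous_stdNormalCdf : Continuous stdNormalCdf :=
  continuous_iff_continuousAt.2 fun x => (hasDerivAt_stdNormalCdf x).continuousAt

lemma stdNormalCdf_neg (x : ℝ) : stdNormalCdf (-x) = 1 - stdNormalCdf x := by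
  have hreflect : stdNormalCdf (-x) = ∫ u in Set.Ioi x, stdNormalPdf u := by
    rw [stdNormalCdf_eq_integral_Iic, ← neg_neg x, ← integral_comp_neg_Iic, neg_neg]
    simp only [stdNormalPdf_neg]
  have hsplit := intervalIntegral.integral_Iic_add_Ioi (b := x) (μ := volume)
    integrable_stdNormalPdf.integrableOn integrable_stdNormalPdf.integrableOn
  rw [← stdNormalCdf_eq_integral_Iic, integral_stdNormalPdf] at hsplit
  rw [hreflect]
  linarith

section RunningMax

variable (T c : ℝ)

noncomputable def runningMaxDensity (m : ℝ) : ℝ :=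
  √(2 / (π * T)) * exp (-(m - c * T) ^ 2 / (2 * T))
    - 2 * c * exp (2 * c * m) * stdNormalCdf (-(m + c * T) / √T)

noncomputable def runningMaxCdf (m : ℝ) : ℝ :=
  exp (2 * c * m) * (stdNormalCdf ((m + c * T) / √T) - 1) + stdNormalCdf ((m - c * T) / √T)

variable {T}

lemma sqrt_mul_exp_eq_stdNormalPdf (hT : 0 < T) (a : ℝ) :
    √(2 / (π * T)) * exp (-a ^ 2 / (2 * T)) = 2 * stdNormalPdf (a / √T) / √T := by
  have hsqrt : √(2 / (π * T)) = 2 / (√(2 * π) * √T) := by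
    rw [eq_div_iff (by positivity), ← sqrt_mul (by positivity), ← sqrt_mul (by positivity),
      show 2 / (π * T) * (2 * π * T) = 2 ^ 2 by field_simp, sqrt_sq zero_le_two]
  rw [hsqrt, stdNormalPdf, div_pow, sq_sqrt hT.le]
  field_simp

lemma exp_mul_stdNormalPdf_add (hT : 0 < T) (m : ℝ) :
    exp (2 * c * m) * stdNormalPdf ((m + c * T) / √T) = stdNormalPdf ((m - c * T) / √T) := by
  simp only [stdNormalPdf, div_pow, sq_sqrt hT.le, ← mul_div_assoc, ← exp_add]
  congr 2
  field_simp
  ring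

lemma runningMaxCdf_zero : runningMaxCdf T c 0 = 0 := by
  simp [runningMaxCdf, neg_div, stdNormalCdf_neg]

lemma hasDerivAt_runningMaxCdf (hT : 0 < T) (m : ℝ) :
    HasDerivAt (runningMaxCdf T c) (runningMaxDensity T c m) m := by
  have hΦ : ∀ b : ℝ, HasDerivAt (fun m => stdNormalCdf ((m + b) / √T))
      (stdNormalPdf ((m + b) / √T) / √T) m := fun b =>
    ((hasDerivAt_stdNormalCdf _).comp m (((hasDerivAt_id m).add_const b).div_const √T)).congr_deriv
      (by rw [id, mul_one_div])
  have hexp : HasDerivAt (fun m => exp (2 * c * m)) (exp (2 * c * m) * (2 * c)) m := by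
    simpa using ((hasDerivAt_id m).const_mul (2 * c)).exp
  have hF := (hexp.mul ((hΦ (c * T)).sub_const 1)).add (hΦ (-(c * T)))
  simp only [← sub_eq_add_neg] at hF
  refine hF.congr_deriv ?_
  rw [runningMaxDensity, sqrt_mul_exp_eq_stdNormalPdf hT, neg_div, stdNormalCdf_neg,
    mul_div_assoc', exp_mul_stdNormalPdf_add c hT]
  ring

end RunningMax

theorem drifted_bm_max_cdf_general (T c M : ℝ) (hT : 0 < T) :
    ∫ m in (0 : ℝ)..M,
      (Real.sqrt (2 / (π * T)) * Real.exp (-(m - c * T) ^ 2 / (2 * T))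
        - 2 * c * Real.exp (2 * c * m) * stdNormalCdf (-(m + c * T) / Real.sqrt T)) =
    Real.exp (2 * c * M) * (stdNormalCdf ((M + c * T) / Real.sqrt T) - 1)
      + stdNormalCdf ((M - c * T) / Real.sqrt T) := by
  have hcont : Continuous (runningMaxDensity T c) := by
    unfold runningMaxDensity
    fun_prop
  change ∫ m in (0 : ℝ)..M, runningMaxDensity T c m = runningMaxCdf T c M
  rw [intervalIntegral.integral_eq_sub_of_hasDerivAt
    (fun m _ => hasDerivAt_runningMaxCdf c hT m) (hcont.intervalIntegrable 0 M),
    runningMaxCdf_zero, sub_zero]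

/-- Integrating the density of the running maximum of a Brownian motion with drift c
and unit volatility from 0 to M yields the closed-form CDF. -/
theorem drifted_bm_max_cdf (T c M : ℝ) (hT : 0 < T) (hM : 0 ≤ M) :
    ∫ m in (0 : ℝ)..M,
      (Real.sqrt (2 / (π * T)) * Real.exp (-(m - c * T) ^ 2 / (2 * T))
        - 2 * c * Real.exp (2 * c * m) * stdNormalCdf (-(m + c * T) / Real.sqrt T)) =
    Real.exp (2 * c * M) * (stdNormalCdf ((M + c * T) / Real.sqrt T) - 1)
      + stdNormalCdf ((M - c * T) / Real.sqrt T) :=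
  drifted_bm_max_cdf_general T c M hT
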